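/- Let Λ(n) denote untyped lambda terms with n free de Bruijn variables, quotiented by βη-equivalence, and let church k := λ s. λ z. sᵏ z be the k-th Church numeral. Then the function church : ℕ → Λ(0) is injective: if church j = church k modulo βη then j = k. -/

import Mathlib

/-- Untyped lambda terms with `n` free de Bruijn variables. -/
inductive Tm : Nat → Type
  | var {n} : Fin n → Tm n
  | app {n} : Tm n → Tm n → Tm n
  | lam {n} : Tm (n + 1) → Tm n

/-- Lifting a renaming under a binder. -/
def liftRen {n m : Nat} (ρ : Fin n → Fin m) : Fin (n + 1) → Fin (m + 1) :=
  Fin.cases 0 (fun i => (ρ i).succ)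

/-- Renaming of terms. -/
def rename : {n m : Nat} → (Fin n → Fin m) → Tm n → Tm m
  | _, _, ρ, .var i => .var (ρ i)
  | _, _, ρ, .app t u => .app (rename ρ t) (rename ρ u)
  | _, _, ρ, .lam t => .lam (rename (liftRen ρ) t)

/-- Lifting a simultaneous substitution under a binder. -/
def liftSub {n m : Nat} (σ : Fin n → Tm m) : Fin (n + 1) → Tm (m + 1) :=
  Fin.cases (.var 0) (fun i => rename Fin.succ (σ i))

/-- Simultaneous substitution. -/
def subst : {n m : Nat} → (Fin n → Tm m) → Tm n → Tm m
  | _, _, σ, .var i => σ i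
  | _, _, σ, .app t u => .app (subst σ t) (subst σ u)
  | _, _, σ, .lam t => .lam (subst (liftSub σ) t)

/-- The single-term substitution `u · id`. -/
def sub1 {n : Nat} (u : Tm n) : Fin (n + 1) → Tm n :=
  Fin.cases u .var

/-- βη-conversion: the congruent equivalence generated by β- and η-reduction. -/
inductive Conv : {n : Nat} → Tm n → Tm n → Prop
  | refl {n} (t : Tm n) : Conv t t
  | symm {n} {t u : Tm n} : Conv t u → Conv u t
  | trans {n} {t u v : Tm n} : Conv t u → Conv u v → Conv t v
  | appCong {n} {t t' u u' : Tm n} : Conv t t' → Conv u u' → Conv (.app t u) (.app t' u')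
  | lamCong {n} {t t' : Tm (n + 1)} : Conv t t' → Conv (.lam t) (.lam t')
  | beta {n} (t : Tm (n + 1)) (u : Tm n) : Conv (.app (.lam t) u) (subst (sub1 u) t)
  | eta {n} (t : Tm n) : Conv (.lam (.app (rename Fin.succ t) (.var 0))) t

/-- The `k`-th Church numeral `λ s. λ z. sᵏ z`. -/
def church (k : Nat) : Tm 0 :=
  .lam (.lam ((fun t => Tm.app (.var 1) t)^[k] (.var 0)))

/-!
βη-conversion is confluent. Parallel βη-reduction has Takahashi's triangle property with respect
to the complete development `dev`, which contracts every β- and η-redex of a term at once; hence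
it has the diamond property and convertible terms have a common reduct. The only reducts of
`church k` are `church k` itself and, for `k = 1`, its η-contraction `λ s. s`. Numerals of
different index have different sizes, so two numerals with a common reduct are equal.
-/

@[simp] theorem liftRen_zero {n m : ℕ} (ρ : Fin n → Fin m) : liftRen ρ 0 = 0 := rfl

@[simp] theorem liftRen_succ {n m : ℕ} (ρ : Fin n → Fin m) (i : Fin n) :
    liftRen ρ i.succ = (ρ i).succ := rfl

@[simp] theorem sub1_zero {n : ℕ} (u : Tm n) : sub1 u 0 = u := rfl

theorem liftRen_comp {n m p : ℕ} (ρ₂ : Fin m → Fin p) (ρ₁ : Fin n → Fin m) :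
    liftRen ρ₂ ∘ liftRen ρ₁ = liftRen (ρ₂ ∘ ρ₁) := by
  funext i; cases i using Fin.cases <;> rfl

theorem rename_rename {n m p : ℕ} (ρ₂ : Fin m → Fin p) (ρ₁ : Fin n → Fin m) (t : Tm n) :
    rename ρ₂ (rename ρ₁ t) = rename (ρ₂ ∘ ρ₁) t := by
  induction t generalizing m p with
  | var i => rfl
  | app a b iha ihb => simp only [rename, iha, ihb]
  | lam a ih => simp only [rename, ih, liftRen_comp]

theorem liftSub_comp_liftRen {n m p : ℕ} (σ : Fin m → Tm p) (ρ : Fin n → Fin m) :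
    liftSub σ ∘ liftRen ρ = liftSub (σ ∘ ρ) := by
  funext i; cases i using Fin.cases <;> rfl

theorem subst_rename {n m p : ℕ} (σ : Fin m → Tm p) (ρ : Fin n → Fin m) (t : Tm n) :
    subst σ (rename ρ t) = subst (σ ∘ ρ) t := by
  induction t generalizing m p with
  | var i => rfl
  | app a b iha ihb => simp only [rename, subst, iha, ihb]
  | lam a ih => simp only [rename, subst, ih, liftSub_comp_liftRen]

theorem rename_liftRen_rename_succ {n m : ℕ} (ρ : Fin n → Fin m) (t : Tm n) :
    rename (liftRen ρ) (rename Fin.succ t) = rename Fin.succ (rename ρ t) := by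
  simp only [rename_rename]; rfl

theorem rename_liftRen_comp_liftSub {n m p : ℕ} (ρ : Fin m → Fin p) (σ : Fin n → Tm m) :
    rename (liftRen ρ) ∘ liftSub σ = liftSub (rename ρ ∘ σ) := by
  funext i
  cases i using Fin.cases
  · rfl
  · exact rename_liftRen_rename_succ ρ _

theorem rename_subst {n m p : ℕ} (ρ : Fin m → Fin p) (σ : Fin n → Tm m) (t : Tm n) :
    rename ρ (subst σ t) = subst (rename ρ ∘ σ) t := by
  induction t generalizing m p with
  | var i => rfl
  | app a b iha ihb => simp only [rename, subst, iha, ihb]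
  | lam a ih => simp only [rename, subst, ih, rename_liftRen_comp_liftSub]

theorem subst_liftSub_rename_succ {n m : ℕ} (σ : Fin n → Tm m) (t : Tm n) :
    subst (liftSub σ) (rename Fin.succ t) = rename Fin.succ (subst σ t) := by
  rw [subst_rename, rename_subst]; rfl

theorem subst_liftSub_comp_liftSub {n m p : ℕ} (σ₂ : Fin m → Tm p) (σ₁ : Fin n → Tm m) :
    subst (liftSub σ₂) ∘ liftSub σ₁ = liftSub (subst σ₂ ∘ σ₁) := by
  funext i
  cases i using Fin.cases
  · rfl
  · exact subst_liftSub_rename_succ σ₂ _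

theorem subst_subst {n m p : ℕ} (σ₂ : Fin m → Tm p) (σ₁ : Fin n → Tm m) (t : Tm n) :
    subst σ₂ (subst σ₁ t) = subst (subst σ₂ ∘ σ₁) t := by
  induction t generalizing m p with
  | var i => rfl
  | app a b iha ihb => simp only [subst, iha, ihb]
  | lam a ih => simp only [subst, ih, subst_liftSub_comp_liftSub]

theorem liftSub_var {n : ℕ} : liftSub (Tm.var : Fin n → Tm n) = .var := by
  funext i; cases i using Fin.cases <;> rfl

theorem subst_var {n : ℕ} (t : Tm n) : subst .var t = t := by
  induction t with
  | var i => rfl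
  | app a b iha ihb => simp only [subst, iha, ihb]
  | lam a ih => simp only [subst, liftSub_var, ih]

theorem subst_sub1_rename_succ {n : ℕ} (u t : Tm n) : subst (sub1 u) (rename Fin.succ t) = t := by
  rw [subst_rename]; exact subst_var t

theorem rename_subst_sub1 {n m : ℕ} (ρ : Fin n → Fin m) (u : Tm n) (t : Tm (n + 1)) :
    rename ρ (subst (sub1 u) t) = subst (sub1 (rename ρ u)) (rename (liftRen ρ) t) := by
  rw [rename_subst, subst_rename]
  congr 1; funext i; cases i using Fin.cases <;> rfl

theorem subst_subst_sub1 {n m : ℕ} (σ : Fin n → Tm m) (u : Tm n) (t : Tm (n + 1)) :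
    subst σ (subst (sub1 u) t) = subst (sub1 (subst σ u)) (subst (liftSub σ) t) := by
  rw [subst_subst, subst_subst]
  congr 1; funext i
  cases i using Fin.cases
  · rfl
  · exact (subst_sub1_rename_succ _ _).symm

theorem subst_sub1_zero_rename_liftRen_succ {n : ℕ} (t : Tm (n + 1)) :
    subst (sub1 (.var 0)) (rename (liftRen Fin.succ) t) = t := by
  rw [subst_rename]
  convert subst_var t
  funext i; cases i using Fin.cases <;> rfl

def Tm.size {n : ℕ} : Tm n → ℕ
  | .var _ => 0
  | .app t u => t.size + u.size + 1
  | .lam t => t.size + 1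

@[simp] theorem Tm.size_rename {n m : ℕ} (ρ : Fin n → Fin m) (t : Tm n) :
    (rename ρ t).size = t.size := by
  induction t generalizing m with
  | var i => rfl
  | app a b iha ihb => simp only [rename, size, iha, ihb]
  | lam a ih => simp only [rename, size, ih]

theorem rename_ne_lam {n m : ℕ} (ρ : Fin n → Fin m) {f : Tm n} (hf : ∀ v, f ≠ .lam v) :
    ∀ v, rename ρ f ≠ .lam v := by
  cases f <;> simp_all [rename]

def etaExpand {n : ℕ} (t : Tm n) : Tm n := .lam (.app (rename Fin.succ t) (.var 0))

theorem rename_etaExpand {n m : ℕ} (ρ : Fin n → Fin m) (t : Tm n) :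
    rename ρ (etaExpand t) = etaExpand (rename ρ t) := by
  simp only [etaExpand, rename, rename_liftRen_rename_succ]; rfl

theorem subst_etaExpand {n m : ℕ} (σ : Fin n → Tm m) (t : Tm n) :
    subst σ (etaExpand t) = etaExpand (subst σ t) := by
  simp only [etaExpand, subst, subst_liftSub_rename_succ]; rfl

theorem rename_eq_rename_of_isPullback {n m k l : ℕ} {ρ : Fin n → Fin m} {σ : Fin k → Fin m}
    {τ : Fin l → Fin n} {κ : Fin l → Fin k} (hpb : ∀ i j, ρ i = σ j → ∃ x, τ x = i ∧ κ x = j)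
    {t : Tm n} {w : Tm k} (h : rename ρ t = rename σ w) :
    ∃ t₀, t = rename τ t₀ ∧ w = rename κ t₀ := by
  induction t generalizing k l m w with
  | var i =>
    cases w <;> simp only [rename, reduceCtorEq, Tm.var.injEq] at h
    obtain ⟨x, rfl, rfl⟩ := hpb _ _ h
    exact ⟨.var x, rfl, rfl⟩
  | app a b iha ihb =>
    cases w <;> simp only [rename, reduceCtorEq, Tm.app.injEq] at h
    obtain ⟨a₀, rfl, rfl⟩ := iha hpb h.1
    obtain ⟨b₀, rfl, rfl⟩ := ihb hpb h.2
    exact ⟨.app a₀ b₀, rfl, rfl⟩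
  | lam a ih =>
    cases w <;> simp only [rename, reduceCtorEq, Tm.lam.injEq] at h
    have hpb' : ∀ i j, liftRen ρ i = liftRen σ j → ∃ x, liftRen τ x = i ∧ liftRen κ x = j := by
      intro i j hij
      cases i using Fin.cases <;> cases j using Fin.cases <;>
        simp only [liftRen_zero, liftRen_succ, Fin.succ_ne_zero, (Fin.succ_ne_zero _).symm,
          Fin.succ_inj] at hij
      · exact ⟨0, rfl, rfl⟩
      · obtain ⟨x, rfl, rfl⟩ := hpb _ _ hij
        exact ⟨x.succ, rfl, rfl⟩
    obtain ⟨a₀, rfl, rfl⟩ := ih hpb' h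
    exact ⟨.lam a₀, rfl, rfl⟩

theorem rename_injective {n m : ℕ} {ρ : Fin n → Fin m} (hρ : ρ.Injective) :
    (rename ρ).Injective := by
  intro t w h
  obtain ⟨t₀, rfl, rfl⟩ :=
    rename_eq_rename_of_isPullback (τ := id) (κ := id) (fun i j hij => ⟨i, rfl, hρ hij⟩) h
  rfl

theorem rename_eq_etaExpand {n m : ℕ} {ρ : Fin n → Fin m} {t : Tm n} {w : Tm m}
    (h : rename ρ t = etaExpand w) : ∃ t₀, t = etaExpand t₀ ∧ w = rename ρ t₀ := by
  rcases t with _ | _ | (_ | ⟨a, i | _ | _⟩ | _) <;>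
    simp only [etaExpand, rename, reduceCtorEq, Tm.lam.injEq, Tm.app.injEq, Tm.var.injEq,
      and_false] at h
  obtain ⟨ha, hi⟩ := h
  obtain rfl : i = 0 := by
    cases i using Fin.cases
    · rfl
    · exact absurd hi (Fin.succ_ne_zero _)
  have hpb : ∀ i j, liftRen ρ i = Fin.succ j → ∃ x, Fin.succ x = i ∧ ρ x = j := by
    intro i j hij
    cases i using Fin.cases
    · exact absurd hij.symm (Fin.succ_ne_zero _)
    · exact ⟨_, rfl, Fin.succ_injective _ hij⟩
  obtain ⟨a₀, rfl, rfl⟩ := rename_eq_rename_of_isPullback hpb ha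
  exact ⟨a₀, rfl, rfl⟩

/-- Parallel βη-reduction. -/
inductive Par : {n : ℕ} → Tm n → Tm n → Prop
  | var {n} (i : Fin n) : Par (.var i) (.var i)
  | app {n} {t t' u u' : Tm n} : Par t t' → Par u u' → Par (.app t u) (.app t' u')
  | lam {n} {t t' : Tm (n + 1)} : Par t t' → Par (.lam t) (.lam t')
  | beta {n} {t t' : Tm (n + 1)} {u u' : Tm n} :
      Par t t' → Par u u' → Par (.app (.lam t) u) (subst (sub1 u') t')
  | eta {n} {t t' : Tm n} : Par t t' → Par (etaExpand t) t'

namespace Par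

theorem refl {n : ℕ} : ∀ t : Tm n, Par t t
  | .var i => .var i
  | .app t u => .app (refl t) (refl u)
  | .lam t => .lam (refl t)

theorem map_rename {n m : ℕ} {t t' : Tm n} (ρ : Fin n → Fin m) (h : Par t t') :
    Par (rename ρ t) (rename ρ t') := by
  induction h generalizing m with
  | var i => exact refl _
  | app _ _ iht ihu => exact .app (iht ρ) (ihu ρ)
  | lam _ ih => exact .lam (ih (liftRen ρ))
  | beta _ _ iht ihu =>
    rw [rename_subst_sub1]
    exact .beta (iht (liftRen ρ)) (ihu ρ)
  | eta _ ih =>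
    rw [rename_etaExpand]
    exact .eta (ih ρ)

theorem map_subst {n m : ℕ} {t t' : Tm n} {σ σ' : Fin n → Tm m} (hσ : ∀ i, Par (σ i) (σ' i))
    (h : Par t t') : Par (subst σ t) (subst σ' t') := by
  have lift : ∀ {n m : ℕ} {σ σ' : Fin n → Tm m}, (∀ i, Par (σ i) (σ' i)) →
      ∀ i, Par (liftSub σ i) (liftSub σ' i) := by
    intro n m σ σ' hσ i
    cases i using Fin.cases
    · exact refl _
    · exact (hσ _).map_rename Fin.succ
  induction h generalizing m with
  | var i => exact hσ i
  | app _ _ iht ihu => exact .app (iht hσ) (ihu hσ)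
  | lam _ ih => exact .lam (ih (lift hσ))
  | beta _ _ iht ihu =>
    rw [subst_subst_sub1]
    exact .beta (iht (lift hσ)) (ihu hσ)
  | eta _ ih =>
    rw [subst_etaExpand]
    exact .eta (ih hσ)

theorem map_subst_sub1 {n : ℕ} {t t' : Tm (n + 1)} {u u' : Tm n} (ht : Par t t') (hu : Par u u') :
    Par (subst (sub1 u) t) (subst (sub1 u') t') :=
  ht.map_subst fun i => by
    cases i using Fin.cases
    · exact hu
    · exact refl _

theorem var_inv {n : ℕ} {i : Fin n} {s : Tm n} (h : Par (.var i) s) : s = .var i := by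
  cases h; rfl

theorem app_inv {n : ℕ} {f u s : Tm n} (h : Par (.app f u) s) :
    (∃ f' u', s = .app f' u' ∧ Par f f' ∧ Par u u') ∨
    (∃ v v' u', f = .lam v ∧ s = subst (sub1 u') v' ∧ Par v v' ∧ Par u u') := by
  cases h with
  | app hf hu => exact .inl ⟨_, _, rfl, hf, hu⟩
  | beta hv hu => exact .inr ⟨_, _, _, rfl, rfl, hv, hu⟩

theorem lam_inv {n : ℕ} {v : Tm (n + 1)} {s : Tm n} (h : Par (.lam v) s) :
    (∃ v', s = .lam v' ∧ Par v v') ∨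
    (∃ w, v = .app (rename Fin.succ w) (.var 0) ∧ Par w s) := by
  cases h with
  | lam hv => exact .inl ⟨_, rfl, hv⟩
  | eta hw => exact .inr ⟨_, rfl, hw⟩

theorem rename_inv {n m : ℕ} {ρ : Fin n → Fin m} {t : Tm n} {s : Tm m}
    (h : Par (rename ρ t) s) : ∃ t', s = rename ρ t' ∧ Par t t' := by
  generalize hx : rename ρ t = x at h
  induction h generalizing n with
  | var i =>
    cases t <;> simp only [rename, reduceCtorEq, Tm.var.injEq] at hx
    subst hx
    exact ⟨_, rfl, refl _⟩
  | app _ _ ihf ihu =>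
    cases t <;> simp only [rename, reduceCtorEq, Tm.app.injEq] at hx
    obtain ⟨f', rfl, hf⟩ := ihf hx.1
    obtain ⟨u', rfl, hu⟩ := ihu hx.2
    exact ⟨.app f' u', rfl, .app hf hu⟩
  | lam _ ih =>
    cases t <;> simp only [rename, reduceCtorEq, Tm.lam.injEq] at hx
    obtain ⟨v', rfl, hv⟩ := ih hx
    exact ⟨.lam v', rfl, .lam hv⟩
  | beta _ _ ihv ihu =>
    rcases t with _ | ⟨_ | _ | f, u⟩ | _ <;>
      simp only [rename, reduceCtorEq, Tm.app.injEq, Tm.lam.injEq, false_and] at hx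
    obtain ⟨v', rfl, hv⟩ := ihv hx.1
    obtain ⟨u', rfl, hu⟩ := ihu hx.2
    exact ⟨_, (rename_subst_sub1 ρ u' v').symm, .beta hv hu⟩
  | eta _ ih =>
    obtain ⟨t₀, rfl, rfl⟩ := rename_eq_etaExpand hx
    obtain ⟨s₀, rfl, hs⟩ := ih rfl
    exact ⟨s₀, rfl, .eta hs⟩

end Par

open Classical in
/-- Takahashi's complete development for βη: all redexes of the term are contracted in parallel,
an η-redex `λ x. w x` taking precedence over the redexes inside it. -/
noncomputable def dev {n : ℕ} : Tm n → Tm n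
  | .var i => .var i
  | .app (.lam v) u => subst (sub1 (dev u)) (dev v)
  | .app f u => .app (dev f) (dev u)
  | .lam v =>
    if h : ∃ w, v = .app (rename Fin.succ w) (.var 0) then dev h.choose else .lam (dev v)
termination_by t => t.size
decreasing_by
  all_goals simp only [Tm.size]
  all_goals try omega
  have hsize := congrArg Tm.size h.choose_spec
  simp only [Tm.size, Tm.size_rename] at hsize
  omega

theorem dev_var {n : ℕ} (i : Fin n) : dev (.var i) = .var i := by
  rw [dev]

theorem dev_app_lam {n : ℕ} (v : Tm (n + 1)) (u : Tm n) :
    dev (.app (.lam v) u) = subst (sub1 (dev u)) (dev v) := by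
  rw [dev]

theorem dev_app_of_ne_lam {n : ℕ} {f : Tm n} (hf : ∀ v, f ≠ .lam v) (u : Tm n) :
    dev (.app f u) = .app (dev f) (dev u) :=
  dev.eq_3 f u hf

theorem dev_etaExpand {n : ℕ} (w : Tm n) : dev (etaExpand w) = dev w := by
  have h : ∃ w', Tm.app (rename Fin.succ w) (.var 0) = .app (rename Fin.succ w') (.var 0) :=
    ⟨w, rfl⟩
  rw [etaExpand, dev, dif_pos h]
  exact congrArg dev (rename_injective (Fin.succ_injective n) (Tm.app.inj h.choose_spec).1).symm

theorem dev_lam_of_ne_etaExpand {n : ℕ} {v : Tm (n + 1)}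
    (hv : ∀ w, v ≠ .app (rename Fin.succ w) (.var 0)) : dev (.lam v) = .lam (dev v) := by
  rw [dev, dif_neg (not_exists.mpr hv)]

theorem dev_rename {n m : ℕ} (ρ : Fin n → Fin m) (t : Tm n) :
    dev (rename ρ t) = rename ρ (dev t) := by
  match t with
  | .var i => simp only [rename, dev_var]
  | .app f u =>
    by_cases hf : ∃ v, f = .lam v
    · obtain ⟨v, rfl⟩ := hf
      simp only [rename, dev_app_lam, dev_rename (liftRen ρ) v, dev_rename ρ u, rename_subst_sub1]
    · push Not at hf
      simp only [rename, dev_app_of_ne_lam (rename_ne_lam ρ hf), dev_app_of_ne_lam hf, dev_rename ρ f,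
        dev_rename ρ u]
  | .lam v =>
    by_cases hv : ∃ w, v = .app (rename Fin.succ w) (.var 0)
    · obtain ⟨w, rfl⟩ := hv
      change dev (rename ρ (etaExpand w)) = rename ρ (dev (etaExpand w))
      rw [rename_etaExpand, dev_etaExpand, dev_etaExpand, dev_rename ρ w]
    · push Not at hv
      have hρv : ∀ w, rename (liftRen ρ) v ≠ .app (rename Fin.succ w) (.var 0) := by
        intro w h
        obtain ⟨t₀, ht₀, -⟩ := rename_eq_etaExpand (ρ := ρ) (t := .lam v) (congrArg Tm.lam h)
        exact hv t₀ (Tm.lam.inj ht₀)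
      rw [rename, dev_lam_of_ne_etaExpand hρv, dev_lam_of_ne_etaExpand hv, dev_rename (liftRen ρ) v]
      rfl
termination_by t.size
decreasing_by all_goals (subst_vars; (try simp only [Tm.size, Tm.size_rename]); omega)

theorem dev_app_rename_succ_lam {n : ℕ} (x : Tm (n + 1)) :
    dev (.app (rename Fin.succ (.lam x)) (.var 0)) = dev x := by
  rw [rename, dev_app_lam, dev_var, dev_rename, subst_sub1_zero_rename_liftRen_succ]

theorem subst_sub1_dev_app_rename_succ {n : ℕ} {f : Tm n} (hf : ∀ v, f ≠ .lam v) (c : Tm n) :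
    subst (sub1 c) (dev (.app (rename Fin.succ f) (.var 0))) = .app (dev f) c := by
  rw [dev_app_of_ne_lam (rename_ne_lam Fin.succ hf), dev_var, dev_rename, subst, subst_sub1_rename_succ, subst, sub1_zero]

theorem Par.app_rename_succ_var_zero_inv {n : ℕ} {w : Tm n} {v' : Tm (n + 1)}
    (h : Par (.app (rename Fin.succ w) (.var 0)) v') :
    ∃ w', Par w w' ∧ (.lam v' = etaExpand w' ∨ .lam v' = w') := by
  rcases h.app_inv with ⟨f', b, rfl, hf, hb⟩ | ⟨x, x', b, hx, rfl, hxx, hb⟩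
  · obtain ⟨w', rfl, hw⟩ := hf.rename_inv
    rw [hb.var_inv]
    exact ⟨w', hw, .inl rfl⟩
  · -- `w = λ x. b`, and contracting `(λ x. b) y` under `λ y` gives back a reduct of `w` itself
    obtain ⟨x₀, rfl, rfl⟩ : ∃ x₀, w = .lam x₀ ∧ x = rename (liftRen Fin.succ) x₀ := by
      cases w <;> simp only [rename, reduceCtorEq, Tm.lam.injEq] at hx
      exact ⟨_, rfl, hx.symm⟩
    obtain ⟨x₁, rfl, hx₁⟩ := hxx.rename_inv
    rw [hb.var_inv, subst_sub1_zero_rename_liftRen_succ]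
    exact ⟨.lam x₁, .lam hx₁, .inr rfl⟩

mutual

/-- The triangle for a β-redex whose function part was reduced, possibly by η, instead of being
contracted. -/
theorem Par.app_dev_of_par_lam {n : ℕ} {v : Tm (n + 1)} {f' u' c : Tm n}
    (hf : Par (.lam v) f') (hu : Par u' c) : Par (.app f' u') (subst (sub1 c) (dev v)) := by
  rcases hf.lam_inv with ⟨v', rfl, hv⟩ | ⟨w, rfl, hw⟩
  · exact .beta hv.dev_of_par hu
  · by_cases hlam : ∃ x, w = .lam x
    · obtain ⟨x, rfl⟩ := hlam
      rw [dev_app_rename_succ_lam]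
      exact hw.app_dev_of_par_lam hu
    · push Not at hlam
      rw [subst_sub1_dev_app_rename_succ hlam]
      exact .app hw.dev_of_par hu
termination_by v.size + 1
decreasing_by all_goals (subst_vars; (try simp only [Tm.size, Tm.size_rename]); omega)

theorem Par.dev_of_par {n : ℕ} {t s : Tm n} (h : Par t s) : Par s (dev t) := by
  match t with
  | .var i =>
    rw [h.var_inv, dev_var]
    exact .var i
  | .app f u =>
    rcases h.app_inv with ⟨f', u', rfl, hf, hu⟩ | ⟨v, v', u', rfl, rfl, hv, hu⟩
    · by_cases hlam : ∃ v, f = .lam v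
      · obtain ⟨v, rfl⟩ := hlam
        rw [dev_app_lam]
        exact hf.app_dev_of_par_lam hu.dev_of_par
      · push Not at hlam
        rw [dev_app_of_ne_lam hlam]
        exact .app hf.dev_of_par hu.dev_of_par
    · rw [dev_app_lam]
      exact hv.dev_of_par.map_subst_sub1 hu.dev_of_par
  | .lam v =>
    rcases h.lam_inv with ⟨v', rfl, hv⟩ | ⟨w, rfl, hw⟩
    · by_cases heta : ∃ w, v = .app (rename Fin.succ w) (.var 0)
      · obtain ⟨w, rfl⟩ := heta
        change Par _ (dev (etaExpand w))
        rw [dev_etaExpand]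
        obtain ⟨w', hw', hv' | hv'⟩ := hv.app_rename_succ_var_zero_inv <;> rw [hv']
        · exact .eta hw'.dev_of_par
        · exact hw'.dev_of_par
      · push Not at heta
        rw [dev_lam_of_ne_etaExpand heta]
        exact .lam hv.dev_of_par
    · change Par _ (dev (etaExpand w))
      rw [dev_etaExpand]
      exact hw.dev_of_par
termination_by t.size
decreasing_by all_goals (subst_vars; (try simp only [Tm.size, Tm.size_rename]); omega)

end

theorem Par.diamond {n : ℕ} {t s₁ s₂ : Tm n} (h₁ : Par t s₁) (h₂ : Par t s₂) :
    ∃ u, Par s₁ u ∧ Par s₂ u :=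
  ⟨dev t, h₁.dev_of_par, h₂.dev_of_par⟩

open Relation

theorem Par.reflTransGen_app {n : ℕ} {t t' u u' : Tm n}
    (ht : ReflTransGen Par t t') (hu : ReflTransGen Par u u') :
    ReflTransGen Par (.app t u) (.app t' u') :=
  (ht.lift (Tm.app · u) fun _ _ h => .app h (.refl u)).trans
    (hu.lift (Tm.app t') fun _ _ h => .app (.refl t') h)

theorem Par.reflTransGen_lam {n : ℕ} {t t' : Tm (n + 1)} (ht : ReflTransGen Par t t') :
    ReflTransGen Par (.lam t) (.lam t') :=
  ht.lift Tm.lam fun _ _ h => .lam h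

theorem Par.equivalence_join_reflTransGen (n : ℕ) :
    Equivalence (Join (ReflTransGen (@Par n))) :=
  Relation.equivalence_join_reflTransGen fun _ _ _ h₁ h₂ =>
    let ⟨d, hd₁, hd₂⟩ := h₁.diamond h₂
    ⟨d, .single hd₁, .single hd₂⟩

theorem Conv.join {n : ℕ} {t u : Tm n} (h : Conv t u) : Join (ReflTransGen Par) t u := by
  induction h with
  | refl t => exact ⟨t, .refl, .refl⟩
  | symm _ ih => exact (Par.equivalence_join_reflTransGen _).symm ih
  | trans _ _ ih₁ ih₂ => exact (Par.equivalence_join_reflTransGen _).trans ih₁ ih₂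
  | appCong _ _ ih₁ ih₂ =>
    obtain ⟨c₁, ht₁, ht₁'⟩ := ih₁
    obtain ⟨c₂, ht₂, ht₂'⟩ := ih₂
    exact ⟨.app c₁ c₂, Par.reflTransGen_app ht₁ ht₂, Par.reflTransGen_app ht₁' ht₂'⟩
  | lamCong _ ih =>
    obtain ⟨c, ht, ht'⟩ := ih
    exact ⟨.lam c, Par.reflTransGen_lam ht, Par.reflTransGen_lam ht'⟩
  | beta t u => exact ⟨_, .single (.beta (.refl t) (.refl u)), .refl⟩
  | eta t => exact ⟨_, .single (.eta (.refl t)), .refl⟩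

theorem Tm.size_iterate_app_var {n : ℕ} (i : Fin n) (t : Tm n) (k : ℕ) :
    ((fun t => Tm.app (.var i) t)^[k] t).size = t.size + k := by
  induction k with
  | zero => rfl
  | succ k ih => rw [Function.iterate_succ_apply', size, ih, size]; omega

theorem Tm.size_church (k : ℕ) : (church k).size = k + 2 := by
  rw [church, size, size, size_iterate_app_var, size]; omega

theorem church_inj {j k : ℕ} : church j = church k ↔ j = k := by
  refine ⟨fun h => ?_, congrArg church⟩
  simpa [Tm.size_church] using congrArg Tm.size h

theorem church_ne_lam_var_zero (k : ℕ) : church k ≠ .lam (.var 0) := fun h => by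
  simpa [Tm.size_church, Tm.size] using congrArg Tm.size h

theorem Par.iterate_app_var_inv {n : ℕ} {i j : Fin n} {k : ℕ} {s : Tm n}
    (h : Par ((fun t => Tm.app (.var i) t)^[k] (.var j)) s) :
    s = (fun t => Tm.app (.var i) t)^[k] (.var j) := by
  induction k generalizing s with
  | zero => exact h.var_inv
  | succ k ih =>
    rw [Function.iterate_succ_apply'] at h ⊢
    rcases h.app_inv with ⟨f', u', rfl, hf, hu⟩ | ⟨_, _, _, hf, -⟩
    · rw [hf.var_inv, ih hu]
    · cases hf

def IsChurchReduct (k : ℕ) (s : Tm 0) : Prop :=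
  s = church k ∨ (k = 1 ∧ s = .lam (.var 0))

theorem Par.church_inv {k : ℕ} {s : Tm 0} (h : Par (church k) s) : IsChurchReduct k s := by
  rcases h.lam_inv with ⟨s₁, rfl, h₁⟩ | ⟨_, hw, -⟩
  · rcases h₁.lam_inv with ⟨b, rfl, hb⟩ | ⟨w, hw, hws⟩
    · exact .inl (by rw [hb.iterate_app_var_inv]; rfl)
    · -- only `church 1 = λ s. λ z. s z` contains an η-redex
      obtain _ | k := k
      · cases hw
      rw [Function.iterate_succ_apply', Tm.app.injEq] at hw
      obtain ⟨hw₁, hk⟩ := hw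
      obtain rfl : k = 0 := by
        simpa [Tm.size_iterate_app_var, Tm.size] using congrArg Tm.size hk
      obtain ⟨j⟩ := w <;> simp only [rename, reduceCtorEq] at hw₁
      rw [Fin.fin_one_eq_zero j] at hws
      rw [hws.var_inv]
      exact .inr ⟨rfl, rfl⟩
  · cases hw

theorem Par.lam_var_zero_inv {s : Tm 0} (h : Par (.lam (.var 0)) s) : s = .lam (.var 0) := by
  rcases h.lam_inv with ⟨b, rfl, hb⟩ | ⟨_, hw, -⟩
  · rw [hb.var_inv]
  · cases hw

theorem IsChurchReduct.par {k : ℕ} {s s' : Tm 0} (hs : IsChurchReduct k s) (h : Par s s') :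
    IsChurchReduct k s' := by
  rcases hs with rfl | ⟨rfl, rfl⟩
  · exact h.church_inv
  · exact .inr ⟨rfl, h.lam_var_zero_inv⟩

theorem IsChurchReduct.of_reflTransGen {k : ℕ} {s : Tm 0} (h : ReflTransGen Par (church k) s) :
    IsChurchReduct k s := by
  induction h with
  | refl => exact .inl rfl
  | tail _ hp ih => exact ih.par hp

theorem IsChurchReduct.unique {j k : ℕ} {s : Tm 0} (hj : IsChurchReduct j s)
    (hk : IsChurchReduct k s) : j = k := by
  rcases hj with rfl | ⟨rfl, rfl⟩ <;> rcases hk with h | ⟨rfl, h⟩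
  · exact church_inj.mp h
  · exact absurd h (church_ne_lam_var_zero j)
  · exact absurd h.symm (church_ne_lam_var_zero k)
  · rfl

/-- Church numerals are injective modulo βη-conversion. -/
theorem church_injective (j k : Nat) (h : Conv (church j) (church k)) : j = k := by
  obtain ⟨s, hj, hk⟩ := h.join
  exact (IsChurchReduct.of_reflTransGen hj).unique (IsChurchReduct.of_reflTransGen hk)
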